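/- arXiv:1912.00362 — 2 statements merged into one kernel-verified Lean document; each statement's English description precedes it below -/
import Mathlib

section
/- Suppose each gradient ∇f_i is L-Lipschitz continuous with L > 0, and let x_t, x_{t-1} be two distinct points with Δx = x_t - x_{t-1} and Δy = ∇f(x_t) - ∇f(x_{t-1}) where f = (1/n)∑f_i. Then the stabilized Barzilai-Borwein step size η_ε = ‖Δx‖² / (|⟨Δx, Δy⟩| + ε‖Δx‖²) with ε > 0 satisfies 1/(L+ε) ≤ η_ε ≤ 1/ε. -/
open scoped RealInnerProductSpace BigOperators

theorem sbb_step_size_bounds {p n : ℕ} (hn : 0 < n)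
    (f : Fin n → EuclideanSpace ℝ (Fin p) → ℝ)
    (g : Fin n → EuclideanSpace ℝ (Fin p) → EuclideanSpace ℝ (Fin p))
    (L ε : ℝ) (hL : 0 < L) (hε : 0 < ε)
    (hgrad : ∀ i x, HasGradientAt (f i) (g i x) x)
    (hlip : ∀ i x y, ‖g i x - g i y‖ ≤ L * ‖x - y‖)
    (xt xt' : EuclideanSpace ℝ (Fin p)) (hne : xt ≠ xt')
    (Δx Δy : EuclideanSpace ℝ (Fin p))
    (hΔx : Δx = xt - xt')
    (hΔy : Δy = ((n : ℝ)⁻¹ • ∑ i, g i xt) - ((n : ℝ)⁻¹ • ∑ i, g i xt'))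
    (η : ℝ) (hη : η = ‖Δx‖ ^ 2 / (|⟪Δx, Δy⟫| + ε * ‖Δx‖ ^ 2)) :
    1 / (L + ε) ≤ η ∧ η ≤ 1 / ε := by
  have hx : (0:ℝ) < ‖Δx‖ := by
    rw [hΔx, norm_pos_iff]
    exact sub_ne_zero.mpr hne
  have hx2 : (0:ℝ) < ‖Δx‖ ^ 2 := by positivity
  have hΔy' : Δy = (n : ℝ)⁻¹ • ∑ i, (g i xt - g i xt') := by
    rw [hΔy, Finset.sum_sub_distrib, smul_sub]
  have hynorm : ‖Δy‖ ≤ L * ‖Δx‖ := by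
    rw [hΔy', norm_smul]
    have h1 : ‖∑ i, (g i xt - g i xt')‖ ≤ ∑ i : Fin n, (L * ‖Δx‖) := by
      refine (norm_sum_le _ _).trans (Finset.sum_le_sum fun i _ => ?_)
      rw [hΔx]; exact hlip i xt xt'
    have hn' : (0:ℝ) < (n:ℝ) := by exact_mod_cast hn
    calc ‖((n:ℝ)⁻¹)‖ * ‖∑ i, (g i xt - g i xt')‖
        ≤ (n:ℝ)⁻¹ * ((n:ℝ) * (L * ‖Δx‖)) := by
          rw [Real.norm_eq_abs, abs_of_nonneg (by positivity)]
          refine mul_le_mul_of_nonneg_left ?_ (by positivity)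
          simpa [Finset.sum_const, Finset.card_univ] using h1
      _ = L * ‖Δx‖ := by field_simp
  have hinner : |⟪Δx, Δy⟫| ≤ L * ‖Δx‖ ^ 2 := by
    calc |⟪Δx, Δy⟫| ≤ ‖Δx‖ * ‖Δy‖ := abs_real_inner_le_norm _ _
      _ ≤ ‖Δx‖ * (L * ‖Δx‖) := by
          exact mul_le_mul_of_nonneg_left hynorm (le_of_lt hx)
      _ = L * ‖Δx‖ ^ 2 := by ring
  have habs : (0:ℝ) ≤ |⟪Δx, Δy⟫| := abs_nonneg _
  have hden : (0:ℝ) < |⟪Δx, Δy⟫| + ε * ‖Δx‖ ^ 2 := by positivity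
  constructor
  · rw [hη, div_le_div_iff₀ (by linarith) hden, one_mul]
    nlinarith
  · rw [hη, div_le_div_iff₀ hden hε, one_mul]
    nlinarith
end

section
/- The function f : ℝ → ℝ given by f(x) = x² + 3sin²(x) satisfies the Polyak-Łojasiewicz inequality (1/2)(f'(x))² ≥ λ(f(x) - f(0)) for all x ∈ ℝ with constant λ = 1/32, where f(0) = 0 is the global minimum value. -/
open Real

lemma key : ∀ x : ℝ, 0 ≤ x → x^2 + 3*Real.sin x^2 ≤ 64*(x + 3*Real.sin x * Real.cos x)^2 := by
  intro x hx
  have hs := Real.sin_le hx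
  have hsx : Real.sin x ^ 2 ≤ x ^ 2 := by
    rcases le_or_gt 1 x with h | h
    · nlinarith [Real.neg_one_le_sin x, Real.sin_le_one x]
    · have : 0 ≤ Real.sin x :=
        Real.sin_nonneg_of_nonneg_of_le_pi hx (by linarith [Real.pi_gt_three])
      nlinarith
  rcases le_or_gt x (π/2) with h1 | h1
  · have hsn : 0 ≤ Real.sin x := Real.sin_nonneg_of_nonneg_of_le_pi hx (by linarith [Real.pi_gt_three])
    have hcn : 0 ≤ Real.cos x := Real.cos_nonneg_of_mem_Icc ⟨by linarith [Real.pi_gt_three], h1⟩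
    nlinarith [mul_nonneg hsn hcn, sq_nonneg (Real.sin x * Real.cos x)]
  · rcases le_or_gt x 2 with h2 | h2
    · have hpi : π > 3.141592 := Real.pi_gt_d6
      have hv : 0 ≤ 2*x - π := by linarith
      have hsv := Real.sin_le hv
      have hsin2 : Real.sin (2*x - π) = -Real.sin (2*x) := Real.sin_sub_pi _
      have h2m : Real.sin (2*x) = 2 * Real.sin x * Real.cos x := Real.sin_two_mul x
      -- so sin x * cos x ≥ (π - 2x)/2
      have hge : Real.sin x * Real.cos x ≥ (π - 2*x)/2 := by
        rw [hsin2, h2m] at hsv; linarith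
      have hkey : x + 3 * Real.sin x * Real.cos x ≥ (3/2)*π - 2*x := by nlinarith
      have hpos : (3/2)*π - 2*x ≥ 0.71 := by linarith
      have hs1 : Real.sin x ^ 2 ≤ 1 := Real.sin_sq_le_one x
      nlinarith
    · have hge : Real.sin x * Real.cos x ≥ -(1/2) := by
        have h2m : Real.sin (2*x) = 2 * Real.sin x * Real.cos x := Real.sin_two_mul x
        have := Real.neg_one_le_sin (2*x)
        linarith [h2m ▸ this]
      have hs1 : Real.sin x ^ 2 ≤ 1 := Real.sin_sq_le_one x
      nlinarith [sq_nonneg (x - 2)]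

lemma dcalc (x : ℝ) : deriv (fun y : ℝ => y ^ 2 + 3 * Real.sin y ^ 2) x
    = 2*x + 6 * Real.sin x * Real.cos x := by
  have h : HasDerivAt (fun y : ℝ => y ^ 2 + 3 * Real.sin y ^ 2)
      (2*x + 6 * Real.sin x * Real.cos x) x := by
    have h1 : HasDerivAt (fun y : ℝ => y ^ 2) (2*x) x := by
      simpa using hasDerivAt_pow 2 x
    have h2 : HasDerivAt (fun y : ℝ => Real.sin y ^ 2) (2 * Real.sin x * Real.cos x) x := by
      simpa using (Real.hasDerivAt_sin x).fun_pow 2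
    have := h1.fun_add ((h2.const_mul (3:ℝ)))
    exact this.congr_deriv (by ring)
  exact h.deriv

theorem pl_example : ∀ x : ℝ,
    (1 / 32 : ℝ) * ((x ^ 2 + 3 * Real.sin x ^ 2) - 0) ≤
      (1 / 2) * (deriv (fun y : ℝ => y ^ 2 + 3 * Real.sin y ^ 2) x) ^ 2 := by
  intro x
  rw [dcalc]
  rcases le_or_gt 0 x with hx | hx
  · have := key x hx
    nlinarith
  · have := key (-x) (by linarith)
    rw [Real.sin_neg, Real.cos_neg] at this
    nlinarith
end
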